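/- For the Chaplygin sleigh on a horizontal plane (U = 0), with defining vector field v on ℝ⁵ and energy E = ½(m v₁² + (I+ma²) ω²), the scaling vector field u = v₁ ∂/∂v₁ + ω ∂/∂ω satisfies [u, v] = v everywhere on ℝ⁵, and ⟨u, ∇E⟩ = 2E everywhere. -/

import Mathlib

/-- The Chaplygin sleigh on a horizontal plane (`U = 0`): the system on ℝ⁵, coordinates
`p = (v₁, ω, x, y, φ)`, parameters `m, I, a > 0`:
`m v̇₁ = m a ω²`, `(I+ma²) ω̇ = −m a ω v₁`, `ẋ = v₁ cos φ`, `ẏ = v₁ sin φ`, `φ̇ = ω`. -/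
noncomputable def sleigh (m I a : ℝ) (p : Fin 5 → ℝ) : Fin 5 → ℝ :=
  ![a * (p 1) ^ 2,
    -(m * a * (p 1) * (p 0)) / (I + m * a ^ 2),
    (p 0) * Real.cos (p 4),
    (p 0) * Real.sin (p 4),
    p 1]

/-- The energy of the Chaplygin sleigh on a horizontal plane:
`E = ½(m v₁² + (I+ma²) ω²)`. -/
noncomputable def sleighE (m I a : ℝ) (p : Fin 5 → ℝ) : ℝ :=
  (1 / 2) * (m * (p 0) ^ 2 + (I + m * a ^ 2) * (p 1) ^ 2)

/-!
The field `u` generates the scalings `S_t (v₁, ω, x, y, φ) = (t v₁, t ω, x, y, φ)`. The sleigh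
field is quadratic in the velocities in its velocity components and linear in them in its
position components, i.e. `v ∘ S_t = t • S_t ∘ v`, while `E ∘ S_t = t² E`. Differentiating at
`t = 1` gives `Dv(u) = u(v) + v` and Euler's relation `DE(u) = 2E`; since `u` is linear,
`Du(v) = u(v)`, so `[u, v] = Dv(u) - Du(v) = v`.
-/

section ScalingAlong

variable {E F : Type*} [NormedAddCommGroup E] [NormedSpace ℝ E] [NormedAddCommGroup F]
  [NormedSpace ℝ F] (L : E →L[ℝ] E)

/-- For a projection `L` this scales the range of `L` by `t` and fixes its kernel. -/
def scalingAlong (t : ℝ) (p : E) : E := p + (t - 1) • L p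

theorem scalingAlong_one (p : E) : scalingAlong L 1 p = p := by
  simp [scalingAlong]

theorem hasDerivAt_scalingAlong (p : E) (t : ℝ) : HasDerivAt (scalingAlong L · p) (L p) t := by
  have h := (((hasDerivAt_id' t).sub_const 1).smul_const (L p)).const_add p
  rwa [one_smul] at h

variable {L} {p : E}

theorem hasDerivAt_comp_scalingAlong {f : E → F} (hf : DifferentiableAt ℝ f p) :
    HasDerivAt (fun t => f (scalingAlong L t p)) (fderiv ℝ f p (L p)) 1 :=
  hf.hasFDerivAt.comp_hasDerivAt_of_eq 1 (hasDerivAt_scalingAlong L p 1) (scalingAlong_one L p).symm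

theorem fderiv_apply_eq_of_scalingAlong_homogeneous {g : E → F} {n : ℕ}
    (hg : DifferentiableAt ℝ g p) (hhom : ∀ t, g (scalingAlong L t p) = t ^ n • g p) :
    fderiv ℝ g p (L p) = (n : ℝ) • g p := by
  have hpow : HasDerivAt (fun t : ℝ => t ^ n • g p) ((n : ℝ) • g p) 1 := by
    simpa using (hasDerivAt_pow n (1 : ℝ)).smul_const (g p)
  exact (hasDerivAt_comp_scalingAlong hg).unique (by simpa only [hhom] using hpow)

theorem fderiv_apply_eq_of_scalingAlong_equivariant {f : E → E} (hf : DifferentiableAt ℝ f p)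
    (hequiv : ∀ t, f (scalingAlong L t p) = t • scalingAlong L t (f p)) :
    fderiv ℝ f p (L p) = L (f p) + f p := by
  have hrhs : HasDerivAt (fun t : ℝ => t • scalingAlong L t (f p)) (L (f p) + f p) 1 := by
    have h := (hasDerivAt_id' (1 : ℝ)).smul (hasDerivAt_scalingAlong L (f p) 1)
    rwa [one_smul, one_smul, scalingAlong_one] at h
  exact (hasDerivAt_comp_scalingAlong hf).unique (by simpa only [hequiv] using hrhs)

theorem lieBracket_eq_self_of_scalingAlong_equivariant {f : E → E} (hf : DifferentiableAt ℝ f p)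
    (hequiv : ∀ t, f (scalingAlong L t p) = t • scalingAlong L t (f p)) :
    VectorField.lieBracket ℝ L f p = f p := by
  rw [VectorField.lieBracket, L.fderiv, fderiv_apply_eq_of_scalingAlong_equivariant hf hequiv]
  abel

end ScalingAlong

def sleighScaling : (Fin 5 → ℝ) →L[ℝ] (Fin 5 → ℝ) :=
  ContinuousLinearMap.pi ![.proj 0, .proj 1, 0, 0, 0]

theorem coe_sleighScaling : ⇑sleighScaling = fun q => ![q 0, q 1, 0, 0, 0] := by
  funext q i
  fin_cases i <;> rfl

theorem sleigh_scalingAlong (m I a t : ℝ) (p : Fin 5 → ℝ) :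
    sleigh m I a (scalingAlong sleighScaling t p)
      = t • scalingAlong sleighScaling t (sleigh m I a p) := by
  funext i
  fin_cases i <;>
    simp only [sleigh, scalingAlong, coe_sleighScaling, Pi.add_apply, Pi.smul_apply, smul_eq_mul,
      Matrix.cons_val, Fin.reduceFinMk, Fin.zero_eta, Fin.mk_one, Fin.isValue, mul_zero,
      add_zero] <;>
    ring

theorem sleighE_scalingAlong (m I a t : ℝ) (p : Fin 5 → ℝ) :
    sleighE m I a (scalingAlong sleighScaling t p) = t ^ 2 • sleighE m I a p := by
  simp only [sleighE, scalingAlong, coe_sleighScaling, Pi.add_apply, Pi.smul_apply,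
    Matrix.cons_val_zero, Matrix.cons_val_one, smul_eq_mul]
  ring

theorem differentiable_sleigh (m I a : ℝ) : Differentiable ℝ (sleigh m I a) := by
  refine differentiable_pi'' fun i => ?_
  fin_cases i <;> simp [sleigh] <;> fun_prop

theorem differentiable_sleighE (m I a : ℝ) : Differentiable ℝ (sleighE m I a) := by
  unfold sleighE
  fun_prop

theorem sleigh_scaling_symmetry_general
    (m I a : ℝ) :
    (∀ p : Fin 5 → ℝ,
      VectorField.lieBracket ℝ (fun q => ![q 0, q 1, 0, 0, 0]) (sleigh m I a) p
        = sleigh m I a p) ∧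
    (∀ p : Fin 5 → ℝ,
      fderiv ℝ (sleighE m I a) p ![p 0, p 1, 0, 0, 0] = 2 * sleighE m I a p) := by
  refine ⟨fun p => ?_, fun p => ?_⟩
  · rw [← coe_sleighScaling]
    exact lieBracket_eq_self_of_scalingAlong_equivariant (differentiable_sleigh m I a p)
      (sleigh_scalingAlong m I a · p)
  · simpa [coe_sleighScaling] using fderiv_apply_eq_of_scalingAlong_homogeneous (n := 2)
      (differentiable_sleighE m I a p) (sleighE_scalingAlong m I a · p)

/-- For the Chaplygin sleigh on a horizontal plane, the scaling vector field
`u = v₁ ∂/∂v₁ + ω ∂/∂ω` satisfies `[u, v] = v` everywhere on ℝ⁵, and `⟨u, ∇E⟩ = 2E`. -/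
theorem sleigh_scaling_symmetry
    (m I a : ℝ) (hm : 0 < m) (hI : 0 < I) (ha : 0 < a) :
    (∀ p : Fin 5 → ℝ,
      VectorField.lieBracket ℝ (fun q => ![q 0, q 1, 0, 0, 0]) (sleigh m I a) p
        = sleigh m I a p) ∧
    (∀ p : Fin 5 → ℝ,
      fderiv ℝ (sleighE m I a) p ![p 0, p 1, 0, 0, 0] = 2 * sleighE m I a p) :=
  sleigh_scaling_symmetry_general m I a
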